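/- For every integer k ≥ 6, there exists a coalition partition Ψ of the path P_k with three parts such that the coalition graph CG(P_k, Ψ) is isomorphic to the complete graph K_3. -/

import Mathlib

open SimpleGraph

attribute [local instance] Classical.propDecidable

def Dominates {V : Type*} (G : SimpleGraph V) (S : Set V) : Prop :=
  ∀ v, v ∉ S → ∃ u ∈ S, G.Adj u v

def Coalition {V : Type*} (G : SimpleGraph V) (A B : Set V) : Prop :=
  Disjoint A B ∧ ¬ Dominates G A ∧ ¬ Dominates G B ∧ Dominates G (A ∪ B)

def IsCoalitionPartition {V : Type*} (G : SimpleGraph V) (P : Finset (Set V)) : Prop :=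
  (∀ A ∈ P, A.Nonempty) ∧
  (∀ A ∈ P, ∀ B ∈ P, A ≠ B → Disjoint A B) ∧
  (∀ v : V, ∃ A ∈ P, v ∈ A) ∧
  (∀ A ∈ P, (Dominates G A ∧ ∃ v, A = {v}) ∨
    (¬ Dominates G A ∧ ∃ B ∈ P, B ≠ A ∧ Coalition G A B))

noncomputable def coalitionNumber {V : Type*} (G : SimpleGraph V) : ℕ :=
  sSup {n | ∃ P : Finset (Set V), IsCoalitionPartition G P ∧ P.card = n}

def coalitionGraph {V : Type*} (G : SimpleGraph V) (P : Finset (Set V)) :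
    SimpleGraph {A : Set V // A ∈ P} where
  Adj A B := Coalition G A.1 B.1
  symm := by
    constructor
    rintro A B ⟨d, na, nb, u⟩
    exact ⟨d.symm, nb, na, by rwa [Set.union_comm]⟩
  loopless := by
    constructor
    rintro ⟨A, hA⟩ ⟨d, na, nb, u⟩
    rw [Set.union_self] at u
    exact na u

/-! Colour the path by `0, 2 ↦ 0`, `3, 4 ↦ 1`, `1, 5 ↦ 2`, and then alternately `1, 2` from
vertex `6` on. With three colour classes, the union of two of them dominates as soon as every
vertex has a neighbour of another colour, which holds here because only `3` and `4` are adjacent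
vertices of equal colour. No class dominates on its own: classes `0`, `1`, `2` miss the closed
neighbourhoods of the vertices `5`, `0`, `3` respectively. -/

namespace Coalition

variable {V : Type*} {G : SimpleGraph V} {A B : Set V}

theorem ne (h : Coalition G A B) : A ≠ B := by
  rintro rfl
  exact h.2.1 (by simpa using h.2.2.2)

theorem nonempty_left (h : Coalition G A B) : A.Nonempty := by
  rw [Set.nonempty_iff_ne_empty]
  rintro rfl
  exact h.2.2.1 (by simpa using h.2.2.2)

end Coalition

section PairwiseCoalition

variable {V : Type*} {G : SimpleGraph V} {P : Finset (Set V)}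

theorem isCoalitionPartition_of_pairwise (hcover : ∀ v, ∃ A ∈ P, v ∈ A) (hcard : 1 < P.card)
    (hP : (P : Set (Set V)).Pairwise (Coalition G)) : IsCoalitionPartition G P := by
  have partner : ∀ A ∈ P, ∃ B ∈ P, B ≠ A ∧ Coalition G A B := fun A hA ↦ by
    obtain ⟨B, hB, hBA⟩ := (Finset.one_lt_card_iff_nontrivial.mp hcard).exists_ne A
    exact ⟨B, hB, hBA, hP hA hB hBA.symm⟩
  refine ⟨fun A hA ↦ ?_, fun A hA B hB hAB ↦ (hP hA hB hAB).1, hcover, fun A hA ↦ ?_⟩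
  · obtain ⟨B, -, -, hAB⟩ := partner A hA
    exact hAB.nonempty_left
  · obtain ⟨B, hB, hBA, hAB⟩ := partner A hA
    exact Or.inr ⟨hAB.2.1, B, hB, hBA, hAB⟩

theorem coalitionGraph_eq_top_of_pairwise (hP : (P : Set (Set V)).Pairwise (Coalition G)) :
    coalitionGraph G P = ⊤ := by
  ext A B
  exact ⟨Adj.ne, fun hAB ↦ hP A.2 B.2 (Subtype.coe_ne_coe.mpr hAB)⟩

end PairwiseCoalition

section Coloring

variable {V : Type*} {G : SimpleGraph V}

theorem exists_coalitionPartition_of_coloring {n : ℕ} (hn : 1 < n) (c : V → Fin n)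
    (hc : Pairwise fun i j ↦ Coalition G (c ⁻¹' {i}) (c ⁻¹' {j})) :
    ∃ P : Finset (Set V), IsCoalitionPartition G P ∧ P.card = n ∧
      Nonempty (coalitionGraph G P ≃g (⊤ : SimpleGraph (Fin n))) := by
  set P := Finset.univ.image fun i ↦ c ⁻¹' {i}
  have hcard : P.card = n := by
    rw [Finset.card_image_of_injective _ fun i j hij ↦ by_contra fun h ↦ (hc h).ne hij,
      Finset.card_univ, Fintype.card_fin]
  have hP : (P : Set (Set V)).Pairwise (Coalition G) := by
    simp only [P, Finset.coe_image, Finset.coe_univ, Set.image_univ]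
    rintro _ ⟨i, rfl⟩ _ ⟨j, rfl⟩ hij
    exact hc fun h ↦ hij (by rw [h])
  have hcover : ∀ v, ∃ A ∈ P, v ∈ A := fun v ↦ ⟨c ⁻¹' {c v}, by simp [P], rfl⟩
  refine ⟨P, isCoalitionPartition_of_pairwise hcover (hcard ▸ hn) hP, hcard, ?_⟩
  rw [coalitionGraph_eq_top_of_pairwise hP]
  exact ⟨Iso.completeGraph (Fintype.equivFinOfCardEq (by simpa using hcard))⟩

theorem pairwise_coalition_of_three_colors (c : V → Fin 3)
    (hfiber : ∀ i, ¬ Dominates G (c ⁻¹' {i})) (hadj : ∀ v, ∃ u, G.Adj u v ∧ c u ≠ c v) :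
    Pairwise fun i j ↦ Coalition G (c ⁻¹' {i}) (c ⁻¹' {j}) := by
  intro i j hij
  refine ⟨Set.disjoint_singleton.mpr hij |>.preimage c, hfiber i, hfiber j, fun v hv ↦ ?_⟩
  obtain ⟨u, huv, hcu⟩ := hadj v
  refine ⟨u, ?_, huv⟩
  simp only [Set.mem_union, Set.mem_preimage, Set.mem_singleton_iff, not_or] at hv ⊢
  omega

end Coloring

def pathColor : ℕ → Fin 3
  | 0 | 2 => 0
  | 3 | 4 => 1
  | 1 | 5 => 2
  | n + 6 => ⟨n % 2 + 1, by omega⟩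

theorem pathColor_succ_ne {n : ℕ} (hn : n ≠ 3) : pathColor (n + 1) ≠ pathColor n := by
  match n with
  | 0 | 1 | 2 | 4 | 5 => decide
  | n + 6 =>
    simp only [pathColor, ne_eq, Fin.ext_iff]
    omega

section Path

variable {k : ℕ}

theorem not_dominates_pathGraph {S : Set (Fin k)} (w : Fin k)
    (h : ∀ u : Fin k, u.val ≤ w.val + 1 → w.val ≤ u.val + 1 → u ∉ S) :
    ¬ Dominates (pathGraph k) S := fun hS ↦ by
  obtain ⟨u, hu, huw⟩ := hS w (h w (by omega) (by omega))
  rw [pathGraph_adj] at huw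
  exact h u (by omega) (by omega) hu

theorem not_dominates_pathColor_fiber (hk : 6 ≤ k) (i : Fin 3) :
    ¬ Dominates (pathGraph k) ((fun v : Fin k ↦ pathColor v) ⁻¹' {i}) := by
  have key : ∀ w < k, (∀ m ∈ Finset.Icc (w - 1) (w + 1), pathColor m ≠ i) →
      ¬ Dominates (pathGraph k) ((fun v : Fin k ↦ pathColor v) ⁻¹' {i}) :=
    fun w hw h ↦ not_dominates_pathGraph ⟨w, hw⟩ fun u h₁ h₂ ↦
      h u (Finset.mem_Icc.mpr ⟨Nat.sub_le_of_le_add h₂, h₁⟩)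
  fin_cases i
  · exact key 5 (by omega) (by decide)
  · exact key 0 (by omega) (by decide)
  · exact key 3 (by omega) (by decide)

theorem exists_adj_pathColor_ne (hk : 6 ≤ k) (v : Fin k) :
    ∃ u : Fin k, (pathGraph k).Adj u v ∧ pathColor u ≠ pathColor v := by
  simp only [pathGraph_adj]
  by_cases hv : v.val = 3
  · refine ⟨⟨2, by omega⟩, Or.inl (by simp [hv]), ?_⟩
    rw [hv]
    exact (pathColor_succ_ne (n := 2) (by decide)).symm
  by_cases hlast : v.val + 1 < k
  · exact ⟨⟨v.val + 1, hlast⟩, Or.inr rfl, pathColor_succ_ne hv⟩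
  · refine ⟨⟨v.val - 1, by omega⟩, Or.inl (Nat.sub_add_cancel (by omega)), ?_⟩
    have := pathColor_succ_ne (n := v.val - 1) (by omega)
    rwa [Nat.sub_add_cancel (by omega), ne_comm] at this

end Path

theorem stmt14 (k : ℕ) (hk : 6 ≤ k) :
    ∃ P : Finset (Set (Fin k)),
      IsCoalitionPartition (SimpleGraph.pathGraph k) P ∧ P.card = 3 ∧
      Nonempty ((coalitionGraph (SimpleGraph.pathGraph k) P) ≃g
        (⊤ : SimpleGraph (Fin 3))) :=
  exists_coalitionPartition_of_coloring (by norm_num) _ <|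
    pairwise_coalition_of_three_colors _ (not_dominates_pathColor_fiber hk)
      (exists_adj_pathColor_ne hk)
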